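/- For any N:M sparsity pattern with 1 ≤ N < M, the expected additional sparsity from double pruning is strictly positive and strictly less than 1 - N/M (the original sparsity ratio). That is, 0 < Σ_{j=N+1}^{M} C(M,j) s^j (1-s)^{M-j} (j-N)/M < 1 - s, where s = N/M. -/

import Mathlib

open Finset

/-- For 1 ≤ N < M, the expected additional sparsity from double pruning is strictly
    positive and strictly less than 1 - N/M. -/
theorem stmt_8 (N M : ℕ) (h1 : 1 ≤ N) (h2 : N < M) :
    let s : ℝ := (N : ℝ) / (M : ℝ)
    0 < ∑ j ∈ Finset.Icc (N + 1) M,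
          (Nat.choose M j : ℝ) * s ^ j * (1 - s) ^ (M - j) * (((j : ℝ) - (N : ℝ)) / (M : ℝ)) ∧
    ∑ j ∈ Finset.Icc (N + 1) M,
          (Nat.choose M j : ℝ) * s ^ j * (1 - s) ^ (M - j) * (((j : ℝ) - (N : ℝ)) / (M : ℝ))
      < 1 - s := by
  intro s
  have hM0 : (0:ℝ) < M := by
    have : 0 < M := by omega
    exact_mod_cast this
  have hN0 : (0:ℝ) < N := by
    have : 0 < N := by omega
    exact_mod_cast this
  have hs0 : 0 < s := div_pos hN0 hM0
  have hs1 : s < 1 := by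
    rw [div_lt_one hM0]; exact_mod_cast h2
  have h1s : 0 < 1 - s := by linarith
  set P : ℕ → ℝ := fun j => (Nat.choose M j : ℝ) * s ^ j * (1 - s) ^ (M - j) with hP
  have hPnn : ∀ j, 0 ≤ P j := by
    intro j; exact mul_nonneg (mul_nonneg (by positivity) (by positivity)) (by positivity)
  have hterm : ∀ j ∈ Finset.Icc (N + 1) M,
      0 ≤ P j * (((j : ℝ) - (N : ℝ)) / (M : ℝ)) := by
    intro j hj
    simp only [mem_Icc] at hj
    have : (N:ℝ) ≤ j := by exact_mod_cast Nat.le_of_succ_le hj.1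
    exact mul_nonneg (hPnn j) (div_nonneg (by linarith) hM0.le)
  constructor
  · apply Finset.sum_pos' hterm
    refine ⟨M, by simp [mem_Icc]; omega, ?_⟩
    have hMN : (N:ℝ) < M := by exact_mod_cast h2
    have : P M = s ^ M := by simp [hP]
    rw [this]
    exact mul_pos (by positivity) (div_pos (by linarith) hM0)
  · have hsum1 : ∑ j ∈ Finset.range (M + 1), P j = 1 := by
      have := add_pow s (1 - s) M
      have h2' : (s + (1 - s)) ^ M = (1:ℝ) := by ring_nf
      rw [h2'] at this
      rw [this]
      apply Finset.sum_congr rfl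
      intro j _; simp only [hP]; ring
    have hsub : Finset.Icc (N + 1) M ⊆ Finset.range (M + 1) := by
      intro j hj; simp only [mem_Icc] at hj; simp [Finset.mem_range]; omega
    have hSlt : ∑ j ∈ Finset.Icc (N + 1) M, P j < 1 := by
      rw [← hsum1]
      apply Finset.sum_lt_sum_of_subset hsub (i := 0)
      · simp
      · simp
      · have : P 0 = (1 - s) ^ M := by simp [hP]
        rw [this]; positivity
      · intro j _ _; exact hPnn j
    have hstep : ∑ j ∈ Finset.Icc (N + 1) M, P j * (((j : ℝ) - (N : ℝ)) / (M : ℝ))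
        ≤ (∑ j ∈ Finset.Icc (N + 1) M, P j) * (1 - s) := by
      rw [Finset.sum_mul]
      apply Finset.sum_le_sum
      intro j hj
      simp only [mem_Icc] at hj
      have hjM : (j:ℝ) ≤ M := by exact_mod_cast hj.2
      have hfrac : ((j : ℝ) - (N : ℝ)) / (M : ℝ) ≤ 1 - s := by
        rw [div_le_iff₀ hM0]
        have : (1 - s) * M = (M:ℝ) - N := by
          show (1 - (N:ℝ) / M) * M = M - N
          rw [sub_mul, one_mul, div_mul_cancel₀ _ hM0.ne']
        rw [this]; linarith
      exact mul_le_mul_of_nonneg_left hfrac (hPnn j)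
    calc ∑ j ∈ Finset.Icc (N + 1) M, P j * (((j : ℝ) - (N : ℝ)) / (M : ℝ))
        ≤ (∑ j ∈ Finset.Icc (N + 1) M, P j) * (1 - s) := hstep
      _ < 1 * (1 - s) := by exact mul_lt_mul_of_pos_right hSlt h1s
      _ = 1 - s := one_mul _
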